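/- Let ρ : M₂(ℝ) → M₄(ℝ) be the third symmetric power representation of 𝔤𝔩₂(ℝ), and let 𝔤 ⊂ M₅(ℝ) be the 8-dimensional real Lie algebra of block matrices [[ρ(A), u],[0, 0]] with A ∈ M₂(ℝ) and u ∈ ℝ⁴ (so 𝔤 ≅ 𝔤𝔩₂(ℝ) ⋉ S³ℝ² with S³ℝ² the irreducible 4-dimensional module). Then every Lie subalgebra 𝔥 of 𝔤 with dim_ℝ 𝔥 = 7 contains the abelian ideal V = {[[0, u],[0, 0]] : u ∈ ℝ⁴}. -/

import Mathlib

open Matrix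

/-- The third symmetric power representation `ρ : 𝔤𝔩₂(ℝ) → 𝔤𝔩₄(ℝ)`, written in the
basis `X³, X²Y, XY², Y³` of binary cubics: `ρ(A)` is the matrix of the derivation
`D_A` with `D_A X = A₁₁X + A₂₁Y`, `D_A Y = A₁₂X + A₂₂Y`. -/
def rho (A : Matrix (Fin 2) (Fin 2) ℝ) : Matrix (Fin 4) (Fin 4) ℝ :=
  !![3 * A 0 0,  A 0 1,             0,                 0;
     3 * A 1 0,  2 * A 0 0 + A 1 1, 2 * A 0 1,         0;
     0,          2 * A 1 0,         A 0 0 + 2 * A 1 1, 3 * A 0 1;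
     0,          0,                 A 1 0,             3 * A 1 1]

/-- The block matrix `[[ρ(A), u],[0, 0]] ∈ M₅(ℝ)`, an element of
`𝔤 ≅ 𝔤𝔩₂(ℝ) ⋉ S³ℝ²`. -/
def blockM (A : Matrix (Fin 2) (Fin 2) ℝ) (u : Fin 4 → ℝ) :
    Matrix (Fin 4 ⊕ Fin 1) (Fin 4 ⊕ Fin 1) ℝ :=
  Matrix.fromBlocks (rho A) (Matrix.of fun i _ => u i) 0 0


lemma rho_zero : rho 0 = 0 := by
  ext i j; fin_cases i <;> fin_cases j <;> simp [rho, Matrix.vecHead, Matrix.vecTail]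

/-- extract A from a block matrix -/
noncomputable def pmap : Matrix (Fin 4 ⊕ Fin 1) (Fin 4 ⊕ Fin 1) ℝ →ₗ[ℝ] Matrix (Fin 2) (Fin 2) ℝ where
  toFun x := !![x (.inl 0) (.inl 0) / 3, x (.inl 0) (.inl 1);
                x (.inl 3) (.inl 2), x (.inl 3) (.inl 3) / 3]
  map_add' x y := by ext i j; fin_cases i <;> fin_cases j <;> simp <;> ring
  map_smul' c x := by ext i j; fin_cases i <;> fin_cases j <;> simp <;> ring

def qmap : Matrix (Fin 4 ⊕ Fin 1) (Fin 4 ⊕ Fin 1) ℝ →ₗ[ℝ] (Fin 4 → ℝ) where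
  toFun x := fun i => x (.inl i) (.inr 0)
  map_add' x y := by funext i; simp
  map_smul' c x := by funext i; simp

lemma pmap_blockM (A : Matrix (Fin 2) (Fin 2) ℝ) (u : Fin 4 → ℝ) : pmap (blockM A u) = A := by
  ext i j; fin_cases i <;> fin_cases j <;> simp [pmap, blockM, rho] <;> ring

lemma qmap_blockM (A : Matrix (Fin 2) (Fin 2) ℝ) (u : Fin 4 → ℝ) : qmap (blockM A u) = u := by
  funext i; simp [qmap, blockM]

def bmap : (Fin 4 → ℝ) →ₗ[ℝ] Matrix (Fin 4 ⊕ Fin 1) (Fin 4 ⊕ Fin 1) ℝ where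
  toFun u := blockM 0 u
  map_add' u v := by
    ext (i | i) (j | j) <;> simp [blockM, rho_zero, fromBlocks]
  map_smul' c u := by
    ext (i | i) (j | j) <;> simp [blockM, rho_zero, fromBlocks]

lemma commutator_eq (A : Matrix (Fin 2) (Fin 2) ℝ) (u w : Fin 4 → ℝ) :
    blockM A u * blockM 0 w - blockM 0 w * blockM A u = blockM 0 ((rho A) *ᵥ w) := by
  simp only [blockM, rho_zero, fromBlocks_multiply]
  ext (i | i) (j | j) <;>
    simp [fromBlocks, mul_apply, mulVec, dotProduct]

open Module in
lemma no_invariant_3dim (K : Submodule ℝ (Fin 4 → ℝ)) (hK : finrank ℝ K = 3)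
    (hinv : ∀ A : Matrix (Fin 2) (Fin 2) ℝ, ∀ w ∈ K, (rho A) *ᵥ w ∈ K) : False := by
  have hfr : finrank ℝ (Fin 4 → ℝ) = 4 := by simp
  have hKtop : K < ⊤ := by
    rcases lt_or_eq_of_le (le_top : K ≤ ⊤) with h | h
    · exact h
    · exfalso; rw [h] at hK; rw [finrank_top] at hK; omega
  obtain ⟨f, hf0, hfmap⟩ := K.exists_dual_map_eq_bot_of_lt_top hKtop inferInstance
  have hker : K ≤ LinearMap.ker f := by
    intro x hx
    have : f x ∈ K.map f := ⟨x, hx, rfl⟩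
    rw [hfmap] at this
    simpa using this
  -- f is surjective
  obtain ⟨v₀, hv₀⟩ : ∃ v, f v ≠ 0 := by
    by_contra h
    push_neg at h
    exact hf0 (LinearMap.ext fun x => h x)
  have hsurj : Function.Surjective f := by
    intro r
    exact ⟨(r / f v₀) • v₀, by simp only [_root_.map_smul, smul_eq_mul]; field_simp⟩
  have hrange : LinearMap.range f = ⊤ := LinearMap.range_eq_top.mpr hsurj
  have hkerdim : finrank ℝ (LinearMap.ker f) = 3 := by
    have := f.finrank_range_add_finrank_ker
    rw [hrange, finrank_top, hfr] at this
    have h1 : finrank ℝ ℝ = 1 := finrank_self ℝ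
    omega
  have hKeq : K = LinearMap.ker f := Submodule.eq_of_le_of_finrank_eq hker (by rw [hK, hkerdim])
  -- normalized vector with f v = 1
  set v : Fin 4 → ℝ := (f v₀)⁻¹ • v₀ with hv
  have hfv : f v = 1 := by simp [hv, inv_mul_cancel₀ hv₀]
  set N := rho !![0, 1; 0, 0] with hN
  set M := rho !![0, 0; 1, 0] with hM
  set c := f (N *ᵥ v) with hc
  set d := f (M *ᵥ v) with hd
  have key : ∀ (B : Matrix (Fin 4) (Fin 4) ℝ), B = N ∨ B = M → ∀ x, f (B *ᵥ x) = f (B *ᵥ v) * f x := by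
    intro B hB x
    have hmem : x - f x • v ∈ K := by
      rw [hKeq]
      simp [LinearMap.mem_ker, hfv]
    have hBmem : B *ᵥ (x - f x • v) ∈ K := by
      rcases hB with h | h <;> rw [h] <;> [exact hinv _ _ hmem; exact hinv _ _ hmem]
    rw [hKeq, LinearMap.mem_ker, mulVec_sub, mulVec_smul, map_sub, _root_.map_smul] at hBmem
    have : f (B *ᵥ x) - f x * f (B *ᵥ v) = 0 := by simpa [smul_eq_mul] using hBmem
    linarith [this]
  set e : Fin 4 → (Fin 4 → ℝ) := fun i => fun j => if i = j then 1 else 0 with he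
  set a : Fin 4 → ℝ := fun i => f (e i) with ha
  -- column computations
  have hN0 : N *ᵥ e 0 = 0 := by
    funext i; fin_cases i <;> simp [he, hN, rho, mulVec, dotProduct, Fin.sum_univ_four, Matrix.vecHead, Matrix.vecTail]
  have hN1 : N *ᵥ e 1 = e 0 := by
    funext i; fin_cases i <;> simp [he, hN, rho, mulVec, dotProduct, Fin.sum_univ_four, Matrix.vecHead, Matrix.vecTail]
  have hN2 : N *ᵥ e 2 = (2:ℝ) • e 1 := by
    funext i; fin_cases i <;> simp [he, hN, rho, mulVec, dotProduct, Fin.sum_univ_four, Matrix.vecHead, Matrix.vecTail]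
  have hN3 : N *ᵥ e 3 = (3:ℝ) • e 2 := by
    funext i; fin_cases i <;> simp [he, hN, rho, mulVec, dotProduct, Fin.sum_univ_four, Matrix.vecHead, Matrix.vecTail]
  have hM0 : M *ᵥ e 0 = (3:ℝ) • e 1 := by
    funext i; fin_cases i <;> simp [he, hM, rho, mulVec, dotProduct, Fin.sum_univ_four, Matrix.vecHead, Matrix.vecTail]
  have hM1 : M *ᵥ e 1 = (2:ℝ) • e 2 := by
    funext i; fin_cases i <;> simp [he, hM, rho, mulVec, dotProduct, Fin.sum_univ_four, Matrix.vecHead, Matrix.vecTail]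
  have hM2 : M *ᵥ e 2 = e 3 := by
    funext i; fin_cases i <;> simp [he, hM, rho, mulVec, dotProduct, Fin.sum_univ_four, Matrix.vecHead, Matrix.vecTail]
  have hM3 : M *ᵥ e 3 = 0 := by
    funext i; fin_cases i <;> simp [he, hM, rho, mulVec, dotProduct, Fin.sum_univ_four, Matrix.vecHead, Matrix.vecTail]
  -- the scalar equations
  have eN0 : 0 = c * a 0 := by
    have := key N (Or.inl rfl) (e 0); rw [hN0] at this; simpa [ha, ← hc] using this
  have eN1 : a 0 = c * a 1 := by
    have := key N (Or.inl rfl) (e 1); rw [hN1] at this; simpa [ha, ← hc] using this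
  have eN2 : 2 * a 1 = c * a 2 := by
    have := key N (Or.inl rfl) (e 2); rw [hN2] at this; simpa [ha, ← hc, smul_eq_mul] using this
  have eN3 : 3 * a 2 = c * a 3 := by
    have := key N (Or.inl rfl) (e 3); rw [hN3] at this; simpa [ha, ← hc, smul_eq_mul] using this
  have eM0 : 3 * a 1 = d * a 0 := by
    have := key M (Or.inr rfl) (e 0); rw [hM0] at this; simpa [ha, ← hd, smul_eq_mul] using this
  have eM2 : a 3 = d * a 2 := by
    have := key M (Or.inr rfl) (e 2); rw [hM2] at this; simpa [ha, ← hd] using this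
  -- all a i vanish
  have haz : ∀ i, a i = 0 := by
    rcases eq_or_ne c 0 with hc0 | hc0
    · rw [hc0] at eN0 eN1 eN2 eN3
      have h0 : a 0 = 0 := by linarith
      have h1 : a 1 = 0 := by linarith
      have h2 : a 2 = 0 := by linarith
      have h3 : a 3 = 0 := by rw [eM2, h2]; ring
      intro i; fin_cases i <;> assumption
    · have h0 : a 0 = 0 := by
        rcases mul_eq_zero.mp eN0.symm with h | h
        · exact absurd h hc0
        · exact h
      have h1 : a 1 = 0 := by
        have : c * a 1 = 0 := by rw [← eN1, h0]
        rcases mul_eq_zero.mp this with h | h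
        · exact absurd h hc0
        · exact h
      have h2 : a 2 = 0 := by
        have : c * a 2 = 0 := by rw [← eN2, h1]; ring
        rcases mul_eq_zero.mp this with h | h
        · exact absurd h hc0
        · exact h
      have h3 : a 3 = 0 := by
        have : c * a 3 = 0 := by rw [← eN3, h2]; ring
        rcases mul_eq_zero.mp this with h | h
        · exact absurd h hc0
        · exact h
      intro i; fin_cases i <;> assumption
  -- hence f = 0, contradiction
  apply hf0
  apply LinearMap.ext
  intro x
  rw [LinearMap.pi_apply_eq_sum_univ f x]
  simp only [LinearMap.zero_apply]
  have : ∀ i : Fin 4, f (fun j => if i = j then (1:ℝ) else 0) = 0 := fun i => haz i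
  rw [Fin.sum_univ_four]
  simp [this 0, this 1, this 2, this 3, smul_eq_mul]

lemma bmap_apply (u : Fin 4 → ℝ) : bmap u = blockM 0 u := rfl


set_option synthInstance.maxHeartbeats 1000000 in
set_option maxHeartbeats 1000000 in
open Module in
/-- Every 7-dimensional Lie subalgebra `𝔥` of `𝔤 = 𝔤𝔩₂(ℝ) ⋉ S³ℝ²` (realized as the
block matrices `[[ρ(A), u],[0,0]]`) contains the abelian ideal
`V = {[[0,u],[0,0]] : u ∈ ℝ⁴}`. -/
theorem seven_dim_subalgebra_contains_translations
    (H : Submodule ℝ (Matrix (Fin 4 ⊕ Fin 1) (Fin 4 ⊕ Fin 1) ℝ))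
    (hsub : ∀ x ∈ H, ∃ A u, x = blockM A u)
    (hlie : ∀ x ∈ H, ∀ y ∈ H, x * y - y * x ∈ H)
    (hdim : Module.finrank ℝ H = 7) :
    ∀ u : Fin 4 → ℝ, blockM 0 u ∈ H := by
  classical
  set K : Submodule ℝ (Fin 4 → ℝ) := Submodule.comap bmap H with hKdef
  have hKmem : ∀ u : Fin 4 → ℝ, u ∈ K ↔ blockM 0 u ∈ H := by
    intro u
    rw [hKdef, Submodule.mem_comap, bmap_apply]
  have hrepr : ∀ x ∈ H, x = blockM (pmap x) (qmap x) := by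
    intro x hx
    obtain ⟨A, u, h⟩ := hsub x hx
    rw [h, pmap_blockM, qmap_blockM]
  set F : H →ₗ[ℝ] Matrix (Fin 2) (Fin 2) ℝ := pmap ∘ₗ H.subtype with hF
  -- kernel of F is isomorphic to K
  have hqK : ∀ x : LinearMap.ker F, qmap (x : Matrix (Fin 4 ⊕ Fin 1) (Fin 4 ⊕ Fin 1) ℝ) ∈ K := by
    rintro ⟨⟨x, hxH⟩, hxk⟩
    have hp : pmap x = 0 := hxk
    have hx : x = blockM 0 (qmap x) := by
      conv_lhs => rw [hrepr x hxH]
      rw [hp]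
    rw [hKmem]
    rw [← hx]
    exact hxH
  set E : LinearMap.ker F →ₗ[ℝ] K :=
    LinearMap.codRestrict K (qmap ∘ₗ H.subtype ∘ₗ (LinearMap.ker F).subtype) hqK with hE
  have hxeq : ∀ x : LinearMap.ker F,
      (x : Matrix (Fin 4 ⊕ Fin 1) (Fin 4 ⊕ Fin 1) ℝ) =
      blockM 0 (qmap (x : Matrix (Fin 4 ⊕ Fin 1) (Fin 4 ⊕ Fin 1) ℝ)) := by
    rintro ⟨⟨x, hxH⟩, hxk⟩
    have hp : pmap x = 0 := hxk
    show x = blockM 0 (qmap x)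
    conv_lhs => rw [hrepr x hxH]
    rw [hp]
  have hEbij : Function.Bijective E := by
    constructor
    · intro x y hxy
      have h1 : qmap ((x : H) : Matrix (Fin 4 ⊕ Fin 1) (Fin 4 ⊕ Fin 1) ℝ)
          = qmap ((y : H) : Matrix (Fin 4 ⊕ Fin 1) (Fin 4 ⊕ Fin 1) ℝ) :=
        congrArg Subtype.val hxy
      have : ((x : H) : Matrix (Fin 4 ⊕ Fin 1) (Fin 4 ⊕ Fin 1) ℝ)
          = ((y : H) : Matrix (Fin 4 ⊕ Fin 1) (Fin 4 ⊕ Fin 1) ℝ) := by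
        rw [hxeq x, hxeq y, h1]
      exact Subtype.ext (Subtype.ext this)
    · rintro ⟨u, hu⟩
      have huH : blockM 0 u ∈ H := (hKmem u).mp hu
      have hker : pmap (blockM 0 u) = 0 := by rw [pmap_blockM]
      refine ⟨⟨⟨blockM 0 u, huH⟩, hker⟩, ?_⟩
      apply Subtype.ext
      show qmap (blockM 0 u) = u
      rw [qmap_blockM]
  have hdimK : finrank ℝ (LinearMap.ker F) = finrank ℝ K :=
    (LinearEquiv.ofBijective E hEbij).finrank_eq
  have hrn : finrank ℝ (LinearMap.range F) + finrank ℝ (LinearMap.ker F) = 7 := by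
    rw [F.finrank_range_add_finrank_ker, hdim]
  have hmat4 : finrank ℝ (Matrix (Fin 2) (Fin 2) ℝ) = 4 := by
    rw [Module.finrank_matrix]; simp
  have hfun4 : finrank ℝ (Fin 4 → ℝ) = 4 := by simp
  have hrle : finrank ℝ (LinearMap.range F) ≤ 4 := by
    have := Submodule.finrank_le (LinearMap.range F)
    omega
  have hKle : finrank ℝ K ≤ 4 := by
    have := Submodule.finrank_le K
    simpa using this
  rcases eq_or_ne (finrank ℝ K) 4 with h4 | h4
  · -- K is everything
    have hKtop : K = ⊤ := by
      apply Submodule.eq_top_of_finrank_eq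
      omega
    intro u
    rw [← hKmem]
    rw [hKtop]
    trivial
  · -- K has dimension 3, range F is everything: contradiction
    exfalso
    have hK3 : finrank ℝ K = 3 := by omega
    have hr4 : finrank ℝ (LinearMap.range F) = 4 := by omega
    have hrtop : LinearMap.range F = ⊤ := by
      apply Submodule.eq_top_of_finrank_eq
      omega
    have hFs : Function.Surjective F := LinearMap.range_eq_top.mp hrtop
    have hinv : ∀ A : Matrix (Fin 2) (Fin 2) ℝ, ∀ w ∈ K, (rho A) *ᵥ w ∈ K := by
      intro A w hw
      obtain ⟨x, hx⟩ := hFs A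
      have hxH : (x : Matrix (Fin 4 ⊕ Fin 1) (Fin 4 ⊕ Fin 1) ℝ) ∈ H := x.2
      have hpx : pmap (x : Matrix (Fin 4 ⊕ Fin 1) (Fin 4 ⊕ Fin 1) ℝ) = A := hx
      have hxb : (x : Matrix (Fin 4 ⊕ Fin 1) (Fin 4 ⊕ Fin 1) ℝ)
          = blockM A (qmap (x : Matrix (Fin 4 ⊕ Fin 1) (Fin 4 ⊕ Fin 1) ℝ)) := by
        conv_lhs => rw [hrepr _ hxH]
        rw [hpx]
      have hwH : blockM 0 w ∈ H := (hKmem w).mp hw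
      have hcomm := hlie _ hxH _ hwH
      rw [hxb, commutator_eq] at hcomm
      exact (hKmem _).mpr hcomm
    exact no_invariant_3dim K hK3 hinv
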